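/- For any r-partite hypergraph G = (A_1,...,A_r, E) with E nonempty, the optimal no-signaling simultaneous guessing probability of the hypergraph game P^G is at most ν_f(G)/|E|, where ν_f(G) is the maximum value of a fractional matching of G. -/

import Mathlib

/-!
Let `g e` be the probability that the strategy wins on the edge `e`. Winning on `e` requires
player `i` to output `e`, and by no-signaling player `i`'s output distribution is the same on
all edges through a vertex `v` of `A i`. Those winning events are therefore disjoint events of
one distribution, so the `g e` over the edges through `v` sum to at most `1`: `g` is a
fractional matching, and its total is at most `ν_f`.
-/

open scoped Classical

open Finset

def marginal {ι X : Type*} [Fintype ι] [DecidableEq ι] [Fintype X] [DecidableEq X]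
    (Q : (ι → X) → X → ℝ) (i : ι) (x o : X) : ℝ :=
  ∑ os : ι → X, if os i = o then Q os x else 0

section Marginal

variable {ι X : Type*} [Fintype ι] [DecidableEq ι] [Fintype X] [DecidableEq X]
  {Q : (ι → X) → X → ℝ}

theorem marginal_nonneg (hQ0 : ∀ os x, 0 ≤ Q os x) (i : ι) (x o : X) :
    0 ≤ marginal Q i x o :=
  sum_nonneg fun os _ => by split_ifs <;> simp [hQ0]

theorem sum_marginal (Q : (ι → X) → X → ℝ) (i : ι) (x : X) :
    ∑ o, marginal Q i x o = ∑ os, Q os x := by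
  unfold marginal
  rw [sum_comm]
  simp

theorem apply_const_le_marginal (hQ0 : ∀ os x, 0 ≤ Q os x) (i : ι) (x o : X) :
    Q (fun _ => o) x ≤ marginal Q i x o := by
  have := single_le_sum (f := fun os : ι → X => if os i = o then Q os x else 0)
    (fun os _ => by split_ifs <;> simp [hQ0]) (mem_univ fun _ => o)
  simpa [marginal] using this

theorem sum_diag_le_one_of_marginal_eq (hQ0 : ∀ os x, 0 ≤ Q os x)
    (hQ1 : ∀ x, ∑ os, Q os x = 1) (i : ι) {S : Finset X}
    (hS : ∀ x ∈ S, ∀ y ∈ S, marginal Q i x = marginal Q i y) :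
    ∑ e ∈ S, Q (fun _ => e) e ≤ 1 := by
  rcases S.eq_empty_or_nonempty with rfl | ⟨a, ha⟩
  · simp
  calc ∑ e ∈ S, Q (fun _ => e) e
      ≤ ∑ e ∈ S, marginal Q i a e := sum_le_sum fun e he =>
        (apply_const_le_marginal hQ0 i e e).trans_eq (congrFun (hS e he a ha) e)
    _ ≤ ∑ e, marginal Q i a e :=
        sum_le_univ_sum_of_nonneg fun e => marginal_nonneg hQ0 i a e
    _ = 1 := (sum_marginal Q i a).trans (hQ1 a)

end Marginal

def IsFractionalMatching {ι : Type*} {A : ι → Type*} (E : Finset (∀ i, A i))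
    (g : (∀ i, A i) → ℝ) : Prop :=
  (∀ e ∈ E, 0 ≤ g e ∧ g e ≤ 1) ∧
    ∀ i, ∀ v : A i, ∑ e ∈ E.filter (fun e => e i = v), g e ≤ 1

theorem isFractionalMatching_winProb {ι : Type*} [Fintype ι] [DecidableEq ι]
    {A : ι → Type*} [∀ i, Fintype (A i)] [DecidableEq (∀ i, A i)] (E : Finset (∀ i, A i))
    {Q : (ι → ∀ i, A i) → (∀ i, A i) → ℝ} (hQ0 : ∀ os x, 0 ≤ Q os x)
    (hQ1 : ∀ x, ∑ os, Q os x = 1)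
    (hQns : ∀ i (a a' : ∀ j, A j), a i = a' i → marginal Q i a = marginal Q i a') :
    IsFractionalMatching E fun e => Q (fun _ => e) e := by
  refine ⟨fun e _ => ⟨hQ0 _ _, ?_⟩, fun i v => ?_⟩
  · exact (single_le_sum (fun os _ => hQ0 os e) (mem_univ _)).trans_eq (hQ1 e)
  · refine sum_diag_le_one_of_marginal_eq hQ0 hQ1 i fun x hx y hy => hQns i x y ?_
    rw [(mem_filter.1 hx).2, (mem_filter.1 hy).2]

theorem ns_value_hypergraph_game_le
    (r : ℕ) (A : Fin r → Type) [∀ i, Fintype (A i)]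
    (E : Finset (∀ i, A i))
    (νf : ℝ)
    (hνf : IsGreatest {s : ℝ | ∃ g : (∀ i, A i) → ℝ,
        (∀ e ∈ E, 0 ≤ g e ∧ g e ≤ 1) ∧
        (∀ i, ∀ v : A i, ∑ e ∈ E.filter (fun e => e i = v), g e ≤ 1) ∧
        s = ∑ e ∈ E, g e} νf)
    (Q : (Fin r → (∀ j, A j)) → (∀ i, A i) → ℝ)
    (hQ0 : ∀ o a, 0 ≤ Q o a)
    (hQ1 : ∀ a, ∑ o : Fin r → (∀ j, A j), Q o a = 1)
    (hQns : ∀ (i : Fin r) (a a' : ∀ j, A j), a i = a' i →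
        ∀ ei : ∀ j, A j,
          (∑ o : Fin r → (∀ j, A j), if o i = ei then Q o a else 0) =
          (∑ o : Fin r → (∀ j, A j), if o i = ei then Q o a' else 0)) :
    (∑ e ∈ E, Q (fun _ => e) e) / (E.card : ℝ) ≤ νf / (E.card : ℝ) := by
  have hmatch := isFractionalMatching_winProb E hQ0 hQ1 fun i a a' h => funext (hQns i a a' h)
  exact div_le_div_of_nonneg_right (hνf.2 ⟨_, hmatch.1, hmatch.2, rfl⟩) (Nat.cast_nonneg _)
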